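/- Let u : V → W be a linear map and let S ⊆ V be an LPL set such that the restriction of u to the closure cl(S) is a proper map (preimages of compact sets are compact). Then the image u(S) ⊆ W is LPL. -/

import Mathlib

open Set

/-- An (open or closed) affine half-space in a real vector space. -/
def IsHalfspace {V : Type*} [AddCommGroup V] [Module ℝ V] (H : Set V) : Prop :=
  ∃ (f : V →ₗ[ℝ] ℝ) (c : ℝ), H = {x | f x < c} ∨ H = {x | f x ≤ c}

/-- A convex polyhedron: the intersection of finitely many open or closed affine
half-spaces (the empty intersection being the whole space). -/
def IsConvexPolyhedron {V : Type*} [AddCommGroup V] [Module ℝ V] (P : Set V) : Prop :=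
  ∃ (n : ℕ) (H : Fin n → Set V), (∀ i, IsHalfspace (H i)) ∧ P = ⋂ i, H i

/-- A PL (piecewise linear) set: a finite union of convex polyhedra. -/
def IsPL {V : Type*} [AddCommGroup V] [Module ℝ V] (S : Set V) : Prop :=
  ∃ (n : ℕ) (P : Fin n → Set V), (∀ i, IsConvexPolyhedron (P i)) ∧ S = ⋃ i, P i

/-- An LPL (locally piecewise linear) set: the union of a locally finite family of
convex polyhedra. -/
def IsLPL {V : Type*} [AddCommGroup V] [Module ℝ V] [TopologicalSpace V] (S : Set V) : Prop :=
  ∃ Ps : Set (Set V), (∀ P ∈ Ps, IsConvexPolyhedron P) ∧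
    LocallyFinite (fun P : Ps => (P : Set V)) ∧ S = ⋃₀ Ps

/-!
The image of a convex polyhedron under a linear map is a convex polyhedron: through the graph
of `u`, this reduces to adding a finitely generated subspace, i.e. to eliminating one direction
`v` at a time. By Helly's theorem on the lines `x + ℝ v`, eliminating `v` from a finite
intersection of half-spaces only involves pairs of half-spaces, for which the elimination is
explicit (Fourier–Motzkin). Properness of `u` on `cl S` makes the family of images locally
finite: near `y` only the polyhedra meeting the compact set `cl S ∩ u⁻¹ K`, for `K` a compact
neighbourhood of `y`, contribute.
-/
open Pointwise Filter

section Basic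
variable {V U : Type*} [AddCommGroup V] [Module ℝ V] [AddCommGroup U] [Module ℝ U]

theorem IsHalfspace.isConvexPolyhedron {H : Set V} (hH : IsHalfspace H) : IsConvexPolyhedron H :=
  ⟨1, fun _ => H, fun _ => hH, (iInter_const H).symm⟩

theorem IsHalfspace.convex {H : Set V} (hH : IsHalfspace H) : Convex ℝ H := by
  obtain ⟨f, c, rfl | rfl⟩ := hH
  exacts [convex_halfSpace_lt f.isLinear c, convex_halfSpace_le f.isLinear c]

theorem IsHalfspace.preimage {H : Set V} (hH : IsHalfspace H) (g : U →ₗ[ℝ] V) :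
    IsHalfspace (g ⁻¹' H) := by
  obtain ⟨f, c, rfl | rfl⟩ := hH
  exacts [⟨f ∘ₗ g, c, Or.inl rfl⟩, ⟨f ∘ₗ g, c, Or.inr rfl⟩]

theorem isConvexPolyhedron_iInter_of_isHalfspace {ι : Type*} [Finite ι] {H : ι → Set V}
    (hH : ∀ i, IsHalfspace (H i)) : IsConvexPolyhedron (⋂ i, H i) := by
  let e := (Finite.equivFin ι).symm
  exact ⟨Nat.card ι, H ∘ e, fun k => hH (e k), (e.surjective.iInter_comp H).symm⟩

theorem isConvexPolyhedron_iInter {ι : Type*} [Finite ι] {P : ι → Set V}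
    (hP : ∀ i, IsConvexPolyhedron (P i)) : IsConvexPolyhedron (⋂ i, P i) := by
  choose n H hH hP using hP
  simp_rw [hP, ← iInter_sigma (fun p : Σ i, Fin (n i) => H p.1 p.2)]
  exact isConvexPolyhedron_iInter_of_isHalfspace fun p => hH p.1 p.2

theorem isConvexPolyhedron_univ : IsConvexPolyhedron (univ : Set V) :=
  ⟨0, fun i => i.elim0, fun i => i.elim0, (iInter_of_empty _).symm⟩

theorem IsConvexPolyhedron.inter {P Q : Set V} (hP : IsConvexPolyhedron P)
    (hQ : IsConvexPolyhedron Q) : IsConvexPolyhedron (P ∩ Q) := by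
  rw [inter_eq_iInter]
  exact isConvexPolyhedron_iInter (Bool.forall_bool.2 ⟨hQ, hP⟩)

theorem IsConvexPolyhedron.preimage {P : Set V} (hP : IsConvexPolyhedron P) (g : U →ₗ[ℝ] V) :
    IsConvexPolyhedron (g ⁻¹' P) := by
  obtain ⟨n, H, hH, rfl⟩ := hP
  rw [preimage_iInter]
  exact ⟨n, _, fun i => (hH i).preimage g, rfl⟩

theorem isConvexPolyhedron_singleton_zero [FiniteDimensional ℝ V] :
    IsConvexPolyhedron ({0} : Set V) := by
  let b := Module.finBasis ℝ V
  have : ({0} : Set V) = ⋂ i, ({x | b.coord i x ≤ 0} ∩ {x | -b.coord i x ≤ 0}) := by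
    ext x
    simp only [mem_singleton_iff, mem_iInter, mem_inter_iff, mem_ofPred_eq, neg_nonpos,
      ← le_antisymm_iff, b.forall_coord_eq_zero_iff]
  rw [this]
  exact isConvexPolyhedron_iInter fun i =>
    (IsHalfspace.isConvexPolyhedron ⟨b.coord i, 0, Or.inr rfl⟩).inter
      (IsHalfspace.isConvexPolyhedron ⟨-b.coord i, 0, Or.inr rfl⟩)

theorem Submodule.isConvexPolyhedron [FiniteDimensional ℝ V] (K : Submodule ℝ V) :
    IsConvexPolyhedron (K : Set V) := by
  have : (K : Set V) = K.mkQ ⁻¹' {0} := by ext; simp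
  rw [this]
  exact isConvexPolyhedron_singleton_zero.preimage K.mkQ

end Basic

def IsLowerRay (R : Set ℝ) : Prop :=
  ∃ c, R = Iio c ∨ R = Iic c

theorem isHalfspace_iff {V : Type*} [AddCommGroup V] [Module ℝ V] {H : Set V} :
    IsHalfspace H ↔ ∃ (f : V →ₗ[ℝ] ℝ) (R : Set ℝ), IsLowerRay R ∧ H = f ⁻¹' R := by
  constructor
  · rintro ⟨f, c, rfl | rfl⟩
    exacts [⟨f, _, ⟨c, Or.inl rfl⟩, rfl⟩, ⟨f, _, ⟨c, Or.inr rfl⟩, rfl⟩]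
  · rintro ⟨f, R, ⟨c, rfl | rfl⟩, rfl⟩
    exacts [⟨f, c, Or.inl rfl⟩, ⟨f, c, Or.inr rfl⟩]

namespace IsLowerRay
variable {R R' : Set ℝ}

theorem nonempty (hR : IsLowerRay R) : R.Nonempty := by
  obtain ⟨c, rfl | rfl⟩ := hR
  exacts [nonempty_Iio, nonempty_Iic]

theorem mem_atBot (hR : IsLowerRay R) : R ∈ atBot := by
  obtain ⟨c, rfl | rfl⟩ := hR
  exacts [Iio_mem_atBot c, Iic_mem_atBot c]

theorem smul (hR : IsLowerRay R) {a : ℝ} (ha : 0 < a) : IsLowerRay (a • R) := by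
  obtain ⟨c, rfl | rfl⟩ := hR
  exacts [⟨a * c, Or.inl (LinearOrderedField.smul_Iio ha)⟩,
    ⟨a * c, Or.inr (LinearOrderedField.smul_Iic ha)⟩]

theorem add (hR : IsLowerRay R) (hR' : IsLowerRay R') : IsLowerRay (R + R') := by
  obtain ⟨c, rfl | rfl⟩ := hR <;> obtain ⟨c', rfl | rfl⟩ := hR' <;>
    [refine ⟨c + c', .inl ?_⟩; refine ⟨c + c', .inl ?_⟩; refine ⟨c + c', .inl ?_⟩;
      refine ⟨c + c', .inr ?_⟩] <;>
    ext z <;> simp only [Set.mem_add, mem_Iio, mem_Iic] <;>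
    exact ⟨fun ⟨x, hx, y, hy, hz⟩ => by linarith,
      fun hz => ⟨(z + c - c') / 2, by linarith, (z - c + c') / 2, by linarith, by ring⟩⟩

theorem smul_add_smul (hR : IsLowerRay R) (hR' : IsLowerRay R') {a b : ℝ} (ha : 0 ≤ a)
    (hb : 0 < b) : IsLowerRay (a • R + b • R') := by
  rcases ha.eq_or_lt with rfl | ha
  · rw [zero_smul_set hR.nonempty, zero_add]
    exact hR'.smul hb
  · exact (hR.smul ha).add (hR'.smul hb)

theorem isHalfspace_preimage {V : Type*} [AddCommGroup V] [Module ℝ V]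
    (hR : IsLowerRay R) (f : V →ₗ[ℝ] ℝ) : IsHalfspace (f ⁻¹' R) :=
  isHalfspace_iff.2 ⟨f, R, hR, rfl⟩

end IsLowerRay

theorem Submodule.mem_set_add_span_singleton {R M : Type*} [Ring R] [AddCommGroup M]
    [Module R M] {A : Set M} {v x : M} :
    x ∈ A + ((R ∙ v : Submodule R M) : Set M) ↔ ∃ t : R, x + t • v ∈ A := by
  simp only [Set.mem_add, SetLike.mem_coe, Submodule.mem_span_singleton]
  constructor
  · rintro ⟨a, ha, _, ⟨t, rfl⟩, rfl⟩
    exact ⟨-t, by simpa [add_assoc] using ha⟩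
  · rintro ⟨t, ht⟩
    exact ⟨_, ht, _, ⟨-t, rfl⟩, by simp [add_assoc]⟩

theorem Real.iInter_nonempty_of_inter_nonempty {ι : Type*} [Finite ι] {T : ι → Set ℝ}
    (hT : ∀ i, Convex ℝ (T i)) (h : ∀ i j, (T i ∩ T j).Nonempty) : (⋂ i, T i).Nonempty := by
  have := Fintype.ofFinite ι
  classical
  simpa using Convex.helly_theorem' (s := Finset.univ) (fun i _ => hT i) fun I _ hI => by
    rw [Module.finrank_self] at hI
    obtain rfl | ⟨i, hi⟩ := I.eq_empty_or_nonempty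
    · simp
    have : Nonempty ι := ⟨i⟩
    obtain ⟨j, hj⟩ := Finset.card_le_one_iff_subset_singleton.1
      (show (I.erase i).card ≤ 1 by rw [Finset.card_erase_of_mem hi]; omega)
    obtain ⟨t, hti, htj⟩ := h i j
    refine ⟨t, mem_iInter₂.2 fun k hk => ?_⟩
    rcases eq_or_ne k i with rfl | hki
    · exact hti
    · rwa [Finset.mem_singleton.1 (hj (Finset.mem_erase.2 ⟨hki, hk⟩))]

section Elimination
variable {V : Type*} [AddCommGroup V] [Module ℝ V]

local notation "line" v => ((ℝ ∙ v : Submodule ℝ V) : Set V)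

theorem iInter_add_span_singleton {ι : Type*} [Finite ι] {C : ι → Set V}
    (hC : ∀ i, Convex ℝ (C i)) (v : V) :
    (⋂ i, C i) + (line v) = ⋂ i, ⋂ j, (C i ∩ C j) + (line v) := by
  ext x
  simp only [mem_iInter, Submodule.mem_set_add_span_singleton, mem_inter_iff]
  refine ⟨fun ⟨t, ht⟩ i j => ⟨t, ht i, ht j⟩, fun h => ?_⟩
  have hline : ∀ i, Convex ℝ ((fun t : ℝ => x + t • v) ⁻¹' C i) := fun i =>
    ((hC i).translate_preimage_right x).linear_preimage (LinearMap.toSpanSingleton ℝ V v)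
  simpa using Real.iInter_nonempty_of_inter_nonempty hline h

theorem preimage_add_span_singleton_of_map_eq_zero {M : Type*} [AddCommGroup M] [Module ℝ M]
    {φ : V →ₗ[ℝ] M} {v : V} (hv : φ v = 0) (B : Set M) : φ ⁻¹' B + (line v) = φ ⁻¹' B := by
  ext x
  simp [Submodule.mem_set_add_span_singleton, hv]

variable {f f' : V →ₗ[ℝ] ℝ} {R R' : Set ℝ} {v : V}

theorem inter_preimage_add_span_singleton_eq_univ (hR : R ∈ atBot) (hR' : R' ∈ atBot)
    (hf : 0 < f v) (hf' : 0 < f' v) : (f ⁻¹' R ∩ f' ⁻¹' R') + (line v) = univ := by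
  refine eq_univ_of_forall fun x => Submodule.mem_set_add_span_singleton.2 ?_
  have hdown : ∀ {g : V →ₗ[ℝ] ℝ}, 0 < g v → Tendsto (fun t : ℝ => g (x + t • v)) atBot atBot :=
    fun hg => by
      simp only [map_add, map_smul, smul_eq_mul]
      exact tendsto_atBot_add_const_left _ _ (tendsto_id.atBot_mul_const hg)
  exact (((hdown hf).eventually hR).and ((hdown hf').eventually hR')).exists

-- `(-f' v) • f + f v • f'` vanishes at `v`: this is Fourier–Motzkin elimination of `v`.
theorem inter_preimage_add_span_singleton (hf : f v ≠ 0) :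
    (f ⁻¹' R ∩ f' ⁻¹' R') + (line v) =
      ((-f' v) • f + f v • f') ⁻¹' ((-f' v) • R + f v • R') := by
  ext x
  rw [Submodule.mem_set_add_span_singleton]
  simp only [mem_inter_iff, mem_preimage, Set.mem_add, Set.mem_smul_set, map_add, map_smul,
    smul_eq_mul, LinearMap.add_apply, LinearMap.smul_apply]
  constructor
  · rintro ⟨t, hR, hR'⟩
    exact ⟨_, ⟨_, hR, rfl⟩, _, ⟨_, hR', rfl⟩, by ring⟩
  · rintro ⟨_, ⟨r, hr, rfl⟩, _, ⟨r', hr', rfl⟩, h⟩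
    have ht : (r - f x) / f v * f v = r - f x := div_mul_cancel₀ _ hf
    refine ⟨(r - f x) / f v, ?_, ?_⟩
    · convert hr using 1
      linear_combination ht
    · convert hr' using 1
      refine mul_left_cancel₀ hf ?_
      linear_combination f' v * ht - h

theorem isConvexPolyhedron_inter_preimage_add_span_singleton_of_pos (hR : IsLowerRay R)
    (hR' : IsLowerRay R') (hf : 0 < f v) :
    IsConvexPolyhedron ((f ⁻¹' R ∩ f' ⁻¹' R') + (line v)) := by
  rcases lt_or_ge 0 (f' v) with hf' | hf'
  · rw [inter_preimage_add_span_singleton_eq_univ hR.mem_atBot hR'.mem_atBot hf hf']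
    exact isConvexPolyhedron_univ
  · rw [inter_preimage_add_span_singleton hf.ne']
    exact ((hR.smul_add_smul hR' (neg_nonneg.2 hf') hf).isHalfspace_preimage
      _).isConvexPolyhedron

theorem isConvexPolyhedron_inter_preimage_add_span_singleton (hR : IsLowerRay R)
    (hR' : IsLowerRay R') (v : V) : IsConvexPolyhedron ((f ⁻¹' R ∩ f' ⁻¹' R') + (line v)) := by
  have span_neg : (line -v) = line v := by rw [← Set.neg_singleton, Submodule.span_neg]
  rcases lt_trichotomy (f v) 0 with hf | hf | hf
  · rw [← span_neg]
    exact isConvexPolyhedron_inter_preimage_add_span_singleton_of_pos hR hR' (by simpa using hf)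
  · rcases lt_trichotomy (f' v) 0 with hf' | hf' | hf'
    · rw [inter_comm, ← span_neg]
      exact isConvexPolyhedron_inter_preimage_add_span_singleton_of_pos hR' hR
        (by simpa using hf')
    · have h0 : f.prod f' v = 0 := by simp [hf, hf']
      rw [show f ⁻¹' R ∩ f' ⁻¹' R' = f.prod f' ⁻¹' (R ×ˢ R') from rfl,
        preimage_add_span_singleton_of_map_eq_zero h0]
      exact (hR.isHalfspace_preimage f).isConvexPolyhedron.inter
        (hR'.isHalfspace_preimage f').isConvexPolyhedron
    · rw [inter_comm]
      exact isConvexPolyhedron_inter_preimage_add_span_singleton_of_pos hR' hR hf'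
  · exact isConvexPolyhedron_inter_preimage_add_span_singleton_of_pos hR hR' hf

theorem IsConvexPolyhedron.add_span_singleton {P : Set V} (hP : IsConvexPolyhedron P) (v : V) :
    IsConvexPolyhedron (P + (line v)) := by
  obtain ⟨n, H, hH, rfl⟩ := hP
  rw [iInter_add_span_singleton (fun i => (hH i).convex)]
  refine isConvexPolyhedron_iInter fun i => isConvexPolyhedron_iInter fun j => ?_
  obtain ⟨f, R, hR, hi⟩ := isHalfspace_iff.1 (hH i)
  obtain ⟨f', R', hR', hj⟩ := isHalfspace_iff.1 (hH j)
  rw [hi, hj]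
  exact isConvexPolyhedron_inter_preimage_add_span_singleton hR hR' v

end Elimination

theorem IsConvexPolyhedron.add_submodule {V : Type*} [AddCommGroup V] [Module ℝ V] {P : Set V}
    (hP : IsConvexPolyhedron P) {K : Submodule ℝ V} (hK : K.FG) :
    IsConvexPolyhedron (P + (K : Set V)) := by
  classical
  obtain ⟨s, rfl⟩ := hK
  induction s using Finset.induction_on generalizing P with
  | empty => simpa using hP
  | insert v s _ ih =>
    rw [Finset.coe_insert, Submodule.span_insert, Submodule.coe_sup, ← add_assoc]
    exact ih (hP.add_span_singleton v)

theorem LinearMap.image_eq_preimage_add_ker {R M N : Type*} [Ring R] [AddCommGroup M]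
    [Module R M] [AddCommGroup N] [Module R N] {π : M →ₗ[R] N} {s : N →ₗ[R] M}
    (hs : π ∘ₗ s = LinearMap.id) (A : Set M) : π '' A = s ⁻¹' (A + LinearMap.ker π) := by
  have hπs : ∀ y, π (s y) = y := LinearMap.congr_fun hs
  ext y
  simp only [mem_image, mem_preimage, Set.mem_add, SetLike.mem_coe, LinearMap.mem_ker]
  constructor
  · rintro ⟨a, ha, rfl⟩
    exact ⟨a, ha, s (π a) - a, by rw [map_sub, hπs, sub_self], add_sub_cancel a _⟩
  · rintro ⟨a, ha, k, hk, hak⟩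
    exact ⟨a, ha, by rw [← hπs y, ← hak, map_add, hk, add_zero]⟩

theorem IsConvexPolyhedron.image {V W : Type*} [AddCommGroup V] [Module ℝ V]
    [FiniteDimensional ℝ V] [AddCommGroup W] [Module ℝ W] [FiniteDimensional ℝ W]
    (u : V →ₗ[ℝ] W) {P : Set V} (hP : IsConvexPolyhedron P) : IsConvexPolyhedron (u '' P) := by
  have hgraph : u '' P = LinearMap.snd ℝ V W '' (LinearMap.fst ℝ V W ⁻¹' P ∩ u.graph) := by
    ext y
    simp [LinearMap.mem_graph_iff, eq_comm]
  rw [hgraph, LinearMap.image_eq_preimage_add_ker (LinearMap.snd_comp_inr ℝ V W)]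
  exact (((hP.preimage _).inter u.graph.isConvexPolyhedron).add_submodule
    (IsNoetherian.noetherian _)).preimage _

theorem LocallyFinite.image_of_isCompact_inter_preimage {ι X Y : Type*} [TopologicalSpace X]
    [TopologicalSpace Y] [WeaklyLocallyCompactSpace Y] {s : ι → Set X} (hs : LocallyFinite s)
    {T : Set X} (hsT : ∀ i, s i ⊆ T) {f : X → Y}
    (hf : ∀ K, IsCompact K → IsCompact (T ∩ f ⁻¹' K)) : LocallyFinite fun i => f '' s i := by
  intro y
  obtain ⟨K, hK, hKy⟩ := exists_compact_mem_nhds y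
  refine ⟨K, hKy, (hs.finite_nonempty_inter_compact (hf K hK)).subset ?_⟩
  rintro i ⟨_, ⟨x, hx, rfl⟩, hxK⟩
  exact ⟨x, hx, hsT i hx, hxK⟩

theorem isLPL_iUnion {V ι : Type*} [AddCommGroup V] [Module ℝ V] [TopologicalSpace V]
    {P : ι → Set V} (hP : ∀ i, IsConvexPolyhedron (P i)) (hlf : LocallyFinite P) :
    IsLPL (⋃ i, P i) :=
  ⟨range P, forall_mem_range.2 hP, hlf.on_range, sUnion_range P |>.symm⟩

theorem LPL_image_of_properOnClosure {V W : Type*} [NormedAddCommGroup V]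
    [NormedSpace ℝ V] [FiniteDimensional ℝ V] [NormedAddCommGroup W] [NormedSpace ℝ W]
    [FiniteDimensional ℝ W] (u : V →ₗ[ℝ] W) (S : Set V) (hS : IsLPL S)
    (hproper : ∀ K : Set W, IsCompact K → IsCompact (closure S ∩ u ⁻¹' K)) :
    IsLPL (u '' S) := by
  obtain ⟨Ps, hPs, hlf, rfl⟩ := hS
  rw [sUnion_eq_iUnion, image_iUnion]
  exact isLPL_iUnion (fun P => (hPs P P.2).image u) <| hlf.image_of_isCompact_inter_preimage
    (fun P => (subset_sUnion_of_mem P.2).trans subset_closure) hproper
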